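/- arXiv:1903.10353 — 4 statements merged into one kernel-verified Lean document; each statement's English description precedes it below -/
import Mathlib

section
/- Let M = G + U where G is the K×K matrix with first column constantly μG and all other columns zero, and U is a K×K matrix with zero first column (u_{k,1} = 0 for all k) such that U^K = 0. Define y^{(n)} = y^{(0)} M^n with y^{(0)} the first standard basis row vector. Then for all n ≥ K, the first coordinate satisfies y_1^{(n)} = μG ∑_{j=0}^{K−1} y_1^{(n−1−j)} ν_j, where ν_j is the sum of the first row of U^j. -/
open Matrix Finset

theorem stmt_6 {K : ℕ} [NeZero K] (μG : ℝ) (G U : Matrix (Fin K) (Fin K) ℝ)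
    (hG : ∀ k j : Fin K, G k j = if j = 0 then μG else 0)
    (hUcol : ∀ k : Fin K, U k 0 = 0) (hUnil : U ^ K = 0) :
    let M := G + U
    let ν : ℕ → ℝ := fun j => ∑ a, (U ^ j) 0 a
    ∀ n, K ≤ n →
      (M ^ n) 0 0 = μG * ∑ j ∈ Finset.range K, (M ^ (n - 1 - j)) 0 0 * ν j := by
  intro M ν n hn
  have hK : 1 ≤ K := NeZero.one_le
  have hM0 : ∀ a : Fin K, M a 0 = μG := by
    intro a
    simp [M, Matrix.add_apply, hG, hUcol]
  have hstep : ∀ m, (M ^ (m + 1)) 0 0 = μG * ∑ a, (M ^ m) 0 a := by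
    intro m
    rw [pow_succ, Matrix.mul_apply, Finset.mul_sum]
    simp_rw [hM0]
    exact Finset.sum_congr rfl fun a _ => mul_comm _ _
  have hB : ∀ m (j : Fin K), (M ^ m) 0 j =
      ∑ i ∈ Finset.range (m + 1), (M ^ (m - i)) 0 0 * (U ^ i) 0 j := by
    intro m
    induction m with
    | zero => intro j; simp
    | succ m ih =>
      intro j
      have hMsplit : ∀ a : Fin K, M a j = G a j + U a j := fun a => rfl
      rw [pow_succ, Matrix.mul_apply]
      simp_rw [hMsplit, mul_add, Finset.sum_add_distrib]
      have h1 : ∑ a, (M ^ m) 0 a * G a j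
          = (M ^ (m + 1)) 0 0 * (U ^ 0) 0 j := by
        simp_rw [hG]
        by_cases hj : j = 0
        · subst hj
          simp [hstep m, Finset.sum_mul, mul_comm]
          rw [← Finset.mul_sum]
        · simp [hj, (Ne.symm hj : (0 : Fin K) ≠ j)]
      have h2 : ∑ a, (M ^ m) 0 a * U a j
          = ∑ i ∈ Finset.range (m + 1), (M ^ (m - i)) 0 0 * (U ^ (i + 1)) 0 j := by
        simp_rw [ih, Finset.sum_mul]
        rw [Finset.sum_comm]
        refine Finset.sum_congr rfl fun i _ => ?_
        rw [pow_succ, Matrix.mul_apply, Finset.mul_sum]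
        simp [mul_assoc]
      rw [h1, h2]
      conv_rhs => rw [Finset.sum_range_succ']
      simp
      ring
  obtain ⟨m, rfl⟩ : ∃ m, n = m + 1 := ⟨n - 1, by omega⟩
  rw [hstep m]
  congr 1
  have key : ∑ a, (M ^ m) 0 a = ∑ i ∈ Finset.range (m + 1), (M ^ (m - i)) 0 0 * ν i := by
    simp_rw [hB m]
    rw [Finset.sum_comm]
    exact Finset.sum_congr rfl fun i _ => by rw [Finset.mul_sum]
  rw [key]
  have h3 : ∑ i ∈ Finset.range (m + 1), (M ^ (m - i)) 0 0 * ν i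
      = ∑ j ∈ Finset.range K, (M ^ (m - j)) 0 0 * ν j := by
    refine (Finset.sum_subset (Finset.range_subset_range.2 (by omega)) ?_).symm
    intro i hi hni
    have hiK : K ≤ i := by simpa using hni
    have hU : U ^ i = 0 := by
      rw [show i = K + (i - K) by omega, pow_add, hUnil, zero_mul]
    simp [ν, hU]
  rw [h3]
  exact Finset.sum_congr rfl fun j hj => by rw [show m + 1 - 1 - j = m - j from by omega]
end

section
/- Under the same hypotheses (M = G + U, U nilpotent with U^K = 0 and zero first column, G with first column constantly μG), the total mass y_n = y^{(0)} M^n · 1 satisfies y_n = ∑_{j=0}^{K−1} y_1^{(n−j)} ν_j for all n ≥ K−1, where y_1^{(m)} is the first coordinate of y^{(0)} M^m and ν_j is the sum of the first row of U^j. -/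
set_option maxRecDepth 10000


open Matrix Finset

theorem stmt_7 {K : ℕ} [NeZero K] (μG : ℝ) (G U : Matrix (Fin K) (Fin K) ℝ)
    (hG : ∀ k j : Fin K, G k j = if j = 0 then μG else 0)
    (hUcol : ∀ k : Fin K, U k 0 = 0) (hUnil : U ^ K = 0) :
    let M := G + U
    let ν : ℕ → ℝ := fun j => ∑ a, (U ^ j) 0 a
    ∀ n, K - 1 ≤ n →
      (∑ a, (M ^ n) 0 a) = ∑ j ∈ Finset.range K, (M ^ (n - j)) 0 0 * ν j := by
  intro M ν n hn
  have hKpos : 0 < K := Nat.pos_of_ne_zero (NeZero.ne K)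
  set y : ℕ → ℝ := fun m => ∑ a, (M ^ m) 0 a with hy
  have hMdef : ∀ b a : Fin K, M b a = (if a = 0 then μG else 0) + U b a := by
    intro b a; simp [M, Matrix.add_apply, hG]
  -- key row recursion
  have hrow : ∀ m (a : Fin K), (M ^ m) 0 a =
      (∑ j ∈ Finset.range m, μG * y (m - 1 - j) * (U ^ j) 0 a) + (U ^ m) 0 a := by
    intro m
    induction m with
    | zero => intro a; simp
    | succ m ih =>
      intro a
      have h1 : (M ^ (m + 1)) 0 a = ∑ b, (M ^ m) 0 b * M b a := by
        rw [pow_succ, Matrix.mul_apply]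
      have split : (∑ b, (M ^ m) 0 b * M b a)
          = (∑ b, (M ^ m) 0 b) * (if a = 0 then μG else 0)
            + ∑ b, (M ^ m) 0 b * U b a := by
        rw [Finset.sum_mul, ← Finset.sum_add_distrib]
        apply Finset.sum_congr rfl; intro b _
        rw [hMdef b a]; ring
      have hsum2 : (∑ b, (M ^ m) 0 b * U b a)
          = (∑ j ∈ Finset.range m, μG * y (m - 1 - j) * (U ^ (j + 1)) 0 a)
            + (U ^ (m + 1)) 0 a := by
        calc (∑ b, (M ^ m) 0 b * U b a)
            = ∑ b, (((∑ j ∈ Finset.range m, μG * y (m - 1 - j) * (U ^ j) 0 b)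
                + (U ^ m) 0 b) * U b a) := by
              exact Finset.sum_congr rfl fun b _ => by rw [ih b]
          _ = ∑ b, ((∑ j ∈ Finset.range m, μG * y (m - 1 - j) * ((U ^ j) 0 b * U b a))
                + (U ^ m) 0 b * U b a) := by
              apply Finset.sum_congr rfl; intro b _
              rw [add_mul, Finset.sum_mul]
              congr 1
              exact Finset.sum_congr rfl fun j _ => by ring
          _ = (∑ j ∈ Finset.range m, μG * y (m - 1 - j) * (∑ b, (U ^ j) 0 b * U b a))
                + ∑ b, (U ^ m) 0 b * U b a := by
              rw [Finset.sum_add_distrib, Finset.sum_comm]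
              congr 1
              exact Finset.sum_congr rfl fun j _ => (Finset.mul_sum _ _ _).symm
          _ = (∑ j ∈ Finset.range m, μG * y (m - 1 - j) * (U ^ (j + 1)) 0 a)
                + (U ^ (m + 1)) 0 a := by
              rw [pow_succ U m, Matrix.mul_apply]
              refine congrArg₂ (· + ·) ?_ rfl
              exact Finset.sum_congr rfl fun j _ => by
                rw [pow_succ, Matrix.mul_apply]
      rw [h1, split, hsum2, Finset.sum_range_succ']
      have hf0 : (∑ b, (M ^ m) 0 b) * (if a = 0 then μG else 0)
          = μG * y m * ((U : Matrix (Fin K) (Fin K) ℝ) ^ 0) 0 a := by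
        simp only [pow_zero, Matrix.one_apply]
        rcases eq_or_ne a 0 with h | h
        · subst h; simp [hy, mul_comm]
        · simp [h, Ne.symm h]
      rw [hf0, show m + 1 - 1 - 0 = m from by omega]
      have hre : (∑ j ∈ Finset.range m, μG * y (m + 1 - 1 - (j + 1)) * (U ^ (j + 1)) 0 a)
          = ∑ j ∈ Finset.range m, μG * y (m - 1 - j) * (U ^ (j + 1)) 0 a :=
        Finset.sum_congr rfl fun j _ => by
          have h : m + 1 - 1 - (j + 1) = m - 1 - j := by omega
          rw [h]
      rw [hre]
      ring
  -- U^j = 0 for j ≥ K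
  have hν0 : ∀ j, K ≤ j → (U : Matrix (Fin K) (Fin K) ℝ) ^ j = 0 := by
    intro j hj
    have : U ^ j = U ^ K * U ^ (j - K) := by
      rw [← pow_add]; congr 1; omega
    rw [this, hUnil, Matrix.zero_mul]
  -- summed recursion
  have hysum : ∀ m, y m = (∑ j ∈ Finset.range m, μG * y (m - 1 - j) * ν j) + ν m := by
    intro m
    have h1 : y m = ∑ a, ((∑ j ∈ Finset.range m, μG * y (m - 1 - j) * (U ^ j) 0 a)
        + (U ^ m) 0 a) := Finset.sum_congr rfl fun a _ => hrow m a
    rw [h1, Finset.sum_add_distrib, Finset.sum_comm]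
    congr 1
    exact Finset.sum_congr rfl fun j _ => (Finset.mul_sum _ _ _).symm
  -- first column of M is constantly μG
  have hx : ∀ m, (M ^ (m + 1)) 0 0 = μG * y m := by
    intro m
    rw [pow_succ, Matrix.mul_apply]
    have hcol : ∀ b : Fin K, M b 0 = μG := by
      intro b; rw [hMdef]; simp [hUcol b]
    simp only [hcol]
    rw [← Finset.sum_mul, mul_comm]
  -- finish
  rcases lt_or_ge n K with hlt | hge
  · -- n = K - 1
    have hK : K = n + 1 := by omega
    have hrK : Finset.range K = Finset.range (n + 1) := by rw [hK]
    rw [show (∑ a, (M ^ n) 0 a) = y n from rfl, hysum n, hrK, Finset.sum_range_succ]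
    congr 1
    · apply Finset.sum_congr rfl
      intro j hj
      have hj' : j < n := Finset.mem_range.mp hj
      have hnj : n - j = (n - 1 - j) + 1 := by omega
      rw [hnj, hx]
    · rw [Nat.sub_self, pow_zero]
      simp [Matrix.one_apply]
  · -- n ≥ K
    rw [show (∑ a, (M ^ n) 0 a) = y n from rfl, hysum n]
    have hνn : ν n = 0 := by simp [ν, hν0 n hge]
    rw [hνn, add_zero]
    have h1 : (∑ j ∈ Finset.range n, μG * y (n - 1 - j) * ν j)
        = ∑ j ∈ Finset.range K, μG * y (n - 1 - j) * ν j := by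
      symm
      apply Finset.sum_subset (Finset.range_subset_range.mpr hge)
      intro j _ hj
      have hKj : K ≤ j := by
        by_contra h
        exact hj (Finset.mem_range.mpr (by omega))
      simp [ν, hν0 j hKj]
    rw [h1]
    apply Finset.sum_congr rfl
    intro j hj
    have hj' : j < K := Finset.mem_range.mp hj
    have hnj : n - j = (n - 1 - j) + 1 := by omega
    rw [hnj, hx]
end

section
/- For the SIS sexually transmitted disease model, (I − P)^{-1} Φ = (I − P^E)^{-1} Φ^E = M, where P, Φ, P^E, Φ^E, M are the explicit 3×3 matrices: P = [[0, ασ/(ασ+γ), 0], [δ/(δ+β+γ), 0, β/(δ+β+γ)], [δ/(δ+2γ), γ/(δ+2γ), 0]], Φ = [[ωσ/(ασ+γ), ρωσ/(ασ+γ), 0], [ρωσ/(δ+β+γ), ρ²ωσ/(δ+β+γ), β/(δ+β+γ)], [ρωσ/(δ+2γ), ρ²ωσ/(δ+2γ), 0]], and M = [[σω(ασρ+δ+γ)/((ασ+δ+γ)γ), σωρ(ασρ+δ+γ)/((ασ+δ+γ)γ), ασβ(δ+2γ)/(γ(ασ+δ+γ)(β+δ+2γ))], [σω(ασρ+δ+γρ)/((ασ+δ+γ)γ),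 σωρ(ασρ+δ+γρ)/((ασ+δ+γ)γ), β(δ+2γ)(ασ+γ)/(γ(ασ+δ+γ)(β+δ+2γ))], [σω(ασρ+δ+γρ)/((ασ+δ+γ)γ), σωρ(ασρ+δ+γρ)/((ασ+δ+γ)γ), β(ασ(δ+γ)+γ²)/(γ(ασ+δ+γ)(β+δ+2γ))]]. -/
/-!
Every row of `P` sums to less than one (each state leaks at rate `γ`), so `1 - P` is strictly
diagonally dominant, hence invertible, and `(1 - P)⁻¹ * Φ = M` reduces to the entrywise identity
`(1 - P) * M = Φ`. The matrices `PE`, `ΦE` describe the same chain with extra self-loops, of rate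
`ε₁ = ω (1 - (1 - ρ)(1 - σ))` at the first state and `ε₂ = ρ ε₁` at the other two. Rescaling row `i`
by (old exit rate)/(new exit rate) turns `1 - PE` into `S * (1 - P)` and `ΦE` into `S * Φ` for one
invertible diagonal `S`, which cancels in `(1 - PE)⁻¹ * ΦE`.
-/

open Matrix

namespace Matrix

variable {n K : Type*} [Fintype n] [DecidableEq n]

theorem det_one_sub_ne_zero_of_sum_norm_lt_one [NormedField K] {P : Matrix n n K}
    (h : ∀ i, ∑ j, ‖P i j‖ < 1) : (1 - P).det ≠ 0 := by
  refine det_ne_zero_of_sum_row_lt_diag fun k => ?_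
  have hrow : ‖P k k‖ + ∑ j ∈ Finset.univ.erase k, ‖P k j‖ = ∑ j, ‖P k j‖ :=
    Finset.add_sum_erase _ (fun j => ‖P k j‖) (Finset.mem_univ k)
  have hdiag : 1 - ‖P k k‖ ≤ ‖(1 - P) k k‖ := by
    simpa [sub_apply] using norm_sub_norm_le (1 : K) (P k k)
  calc ∑ j ∈ Finset.univ.erase k, ‖(1 - P) k j‖
      = ∑ j ∈ Finset.univ.erase k, ‖P k j‖ :=
        Finset.sum_congr rfl fun j hj => by
          simp [sub_apply, one_apply_ne' (Finset.ne_of_mem_erase hj)]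
    _ < 1 - ‖P k k‖ := by linarith [h k, hrow]
    _ ≤ ‖(1 - P) k k‖ := hdiag

theorem mul_inv_mul_mul_cancel_left [CommRing K] {S A B : Matrix n n K} (hS : IsUnit S.det) :
    (S * A)⁻¹ * (S * B) = A⁻¹ * B := by
  rw [mul_inv_rev, Matrix.mul_assoc, nonsing_inv_mul_cancel_left S B hS]

end Matrix

noncomputable section

namespace SIS

variable (α β γ δ ω ρ σ : ℝ)

def P : Matrix (Fin 3) (Fin 3) ℝ :=
  !![0, α*σ/(α*σ+γ), 0;
     δ/(δ+β+γ), 0, β/(δ+β+γ);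
     δ/(δ+2*γ), γ/(δ+2*γ), 0]

def Φ : Matrix (Fin 3) (Fin 3) ℝ :=
  !![ω*σ/(α*σ+γ), ρ*ω*σ/(α*σ+γ), 0;
     ρ*ω*σ/(δ+β+γ), ρ^2*ω*σ/(δ+β+γ), β/(δ+β+γ);
     ρ*ω*σ/(δ+2*γ), ρ^2*ω*σ/(δ+2*γ), 0]

def PE (ε₁ ε₂ : ℝ) : Matrix (Fin 3) (Fin 3) ℝ :=
  !![ε₁/(α*σ+ε₁+γ), α*σ/(α*σ+ε₁+γ), 0;
     δ/(δ+ε₂+β+γ), ε₂/(δ+ε₂+β+γ), β/(δ+ε₂+β+γ);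
     δ/(δ+ε₂+2*γ), γ/(δ+ε₂+2*γ), ε₂/(δ+ε₂+2*γ)]

def ΦE (ε₁ ε₂ : ℝ) : Matrix (Fin 3) (Fin 3) ℝ :=
  !![ω*σ/(α*σ+ε₁+γ), ρ*ω*σ/(α*σ+ε₁+γ), 0;
     ρ*ω*σ/(δ+ε₂+β+γ), ρ^2*ω*σ/(δ+ε₂+β+γ), β/(δ+ε₂+β+γ);
     ρ*ω*σ/(δ+ε₂+2*γ), ρ^2*ω*σ/(δ+ε₂+2*γ), 0]

def M : Matrix (Fin 3) (Fin 3) ℝ :=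
  !![σ*ω*(α*σ*ρ+δ+γ)/((α*σ+δ+γ)*γ), σ*ω*ρ*(α*σ*ρ+δ+γ)/((α*σ+δ+γ)*γ),
       α*σ*β*(δ+2*γ)/(γ*(α*σ+δ+γ)*(β+δ+2*γ));
     σ*ω*(α*σ*ρ+δ+γ*ρ)/((α*σ+δ+γ)*γ), σ*ω*ρ*(α*σ*ρ+δ+γ*ρ)/((α*σ+δ+γ)*γ),
       β*(δ+2*γ)*(α*σ+γ)/(γ*(α*σ+δ+γ)*(β+δ+2*γ));
     σ*ω*(α*σ*ρ+δ+γ*ρ)/((α*σ+δ+γ)*γ), σ*ω*ρ*(α*σ*ρ+δ+γ*ρ)/((α*σ+δ+γ)*γ),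
       β*(α*σ*(δ+γ)+γ^2)/(γ*(α*σ+δ+γ)*(β+δ+2*γ))]

variable {α β γ δ σ} (hα : 0 ≤ α) (hσ : 0 ≤ σ) (hβ : 0 ≤ β) (hδ : 0 ≤ δ) (hγ : 0 < γ)
include hα hσ hβ hδ hγ

theorem sum_norm_P_lt_one (i : Fin 3) : ∑ j, ‖P α β γ δ σ i j‖ < 1 := by
  have h₁ : 0 < α*σ+γ := by positivity
  have h₂ : 0 < δ+β+γ := by positivity
  have h₃ : 0 < δ+2*γ := by positivity
  fin_cases i <;>
    simp only [P, Fin.sum_univ_three, Fin.zero_eta, Fin.mk_one, Fin.reduceFinMk, Fin.isValue,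
      of_apply, cons_val', cons_val_zero, cons_val_one, cons_val, cons_val_fin_one,
      Real.norm_eq_abs, abs_zero, abs_div, abs_of_pos h₁, abs_of_pos h₂, abs_of_pos h₃,
      abs_of_nonneg (mul_nonneg hα hσ), abs_of_nonneg hβ, abs_of_nonneg hδ, abs_of_pos hγ] <;>
    field_simp <;> linarith

theorem one_sub_P_mul_M : (1 - P α β γ δ σ) * M α β γ δ ω ρ σ = Φ α β γ δ ω ρ σ := by
  ext i j
  fin_cases i <;> fin_cases j <;>
    simp only [P, M, Φ, Matrix.mul_apply, Fin.sum_univ_three, Matrix.sub_apply, Matrix.one_apply,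
      Fin.zero_eta, Fin.mk_one, Fin.reduceFinMk, Fin.isValue, of_apply, cons_val', cons_val_zero,
      cons_val_one, cons_val, cons_val_fin_one, Fin.reduceEq, if_true, if_false] <;>
    field_simp <;> ring

theorem inv_one_sub_P_mul_Φ : (1 - P α β γ δ σ)⁻¹ * Φ α β γ δ ω ρ σ = M α β γ δ ω ρ σ := by
  have hdet := det_one_sub_ne_zero_of_sum_norm_lt_one (sum_norm_P_lt_one hα hσ hβ hδ hγ)
  rw [← one_sub_P_mul_M ω ρ hα hσ hβ hδ hγ, nonsing_inv_mul_cancel_left _ _ hdet.isUnit]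

theorem inv_one_sub_PE_mul_ΦE {ε₁ ε₂ : ℝ} (hε₁ : 0 ≤ ε₁) (hε₂ : 0 ≤ ε₂) :
    (1 - PE α β γ δ σ ε₁ ε₂)⁻¹ * ΦE α β γ δ ω ρ σ ε₁ ε₂ = M α β γ δ ω ρ σ := by
  set S : Matrix (Fin 3) (Fin 3) ℝ :=
    diagonal ![(α*σ+γ)/(α*σ+ε₁+γ), (δ+β+γ)/(δ+ε₂+β+γ), (δ+2*γ)/(δ+ε₂+2*γ)]
  have hS : S.det ≠ 0 := by
    simp only [S, det_diagonal, Fin.prod_univ_three, cons_val]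
    positivity
  have h_one_sub : 1 - PE α β γ δ σ ε₁ ε₂ = S * (1 - P α β γ δ σ) := by
    ext i j
    fin_cases i <;> fin_cases j <;>
      simp only [S, PE, P, Matrix.sub_apply, Matrix.one_apply, diagonal_mul, Fin.zero_eta,
        Fin.mk_one, Fin.reduceFinMk, Fin.isValue, of_apply, cons_val', cons_val_zero, cons_val_one,
        cons_val, cons_val_fin_one, Fin.reduceEq, if_true, if_false] <;>
      field_simp <;> ring
  have h_Φ : ΦE α β γ δ ω ρ σ ε₁ ε₂ = S * Φ α β γ δ ω ρ σ := by
    ext i j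
    fin_cases i <;> fin_cases j <;>
      simp only [S, ΦE, Φ, diagonal_mul, Fin.zero_eta, Fin.mk_one, Fin.reduceFinMk, Fin.isValue,
        of_apply, cons_val', cons_val_zero, cons_val_one, cons_val, cons_val_fin_one, mul_zero] <;>
      field_simp
  rw [h_one_sub, h_Φ, mul_inv_mul_mul_cancel_left hS.isUnit,
    inv_one_sub_P_mul_Φ ω ρ hα hσ hβ hδ hγ]

end SIS

end

theorem stmt_11 (α β γ δ ω ρ σ : ℝ)
    (hα : 0 < α) (hβ : 0 < β) (hγ : 0 < γ) (hδ : 0 < δ) (hω : 0 < ω)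
    (hρ : ρ ∈ Set.Icc (0:ℝ) 1) (hσ : σ ∈ Set.Ioo (0:ℝ) 1) :
    let P : Matrix (Fin 3) (Fin 3) ℝ :=
      !![0, α*σ/(α*σ+γ), 0;
         δ/(δ+β+γ), 0, β/(δ+β+γ);
         δ/(δ+2*γ), γ/(δ+2*γ), 0]
    let Φ : Matrix (Fin 3) (Fin 3) ℝ :=
      !![ω*σ/(α*σ+γ), ρ*ω*σ/(α*σ+γ), 0;
         ρ*ω*σ/(δ+β+γ), ρ^2*ω*σ/(δ+β+γ), β/(δ+β+γ);
         ρ*ω*σ/(δ+2*γ), ρ^2*ω*σ/(δ+2*γ), 0]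
    let PE : Matrix (Fin 3) (Fin 3) ℝ :=
      !![ω*(1-(1-ρ)*(1-σ))/(α*σ+ω*(1-(1-ρ)*(1-σ))+γ), α*σ/(α*σ+ω*(1-(1-ρ)*(1-σ))+γ), 0;
         δ/(δ+ρ*ω*(1-(1-ρ)*(1-σ))+β+γ), ρ*ω*(1-(1-ρ)*(1-σ))/(δ+ρ*ω*(1-(1-ρ)*(1-σ))+β+γ),
           β/(δ+ρ*ω*(1-(1-ρ)*(1-σ))+β+γ);
         δ/(δ+ρ*ω*(1-(1-ρ)*(1-σ))+2*γ), γ/(δ+ρ*ω*(1-(1-ρ)*(1-σ))+2*γ),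
           ρ*ω*(1-(1-ρ)*(1-σ))/(δ+ρ*ω*(1-(1-ρ)*(1-σ))+2*γ)]
    let ΦE : Matrix (Fin 3) (Fin 3) ℝ :=
      !![ω*σ/(α*σ+ω*(1-(1-ρ)*(1-σ))+γ), ρ*ω*σ/(α*σ+ω*(1-(1-ρ)*(1-σ))+γ), 0;
         ρ*ω*σ/(δ+ρ*ω*(1-(1-ρ)*(1-σ))+β+γ), ρ^2*ω*σ/(δ+ρ*ω*(1-(1-ρ)*(1-σ))+β+γ),
           β/(δ+ρ*ω*(1-(1-ρ)*(1-σ))+β+γ);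
         ρ*ω*σ/(δ+ρ*ω*(1-(1-ρ)*(1-σ))+2*γ), ρ^2*ω*σ/(δ+ρ*ω*(1-(1-ρ)*(1-σ))+2*γ), 0]
    let M : Matrix (Fin 3) (Fin 3) ℝ :=
      !![σ*ω*(α*σ*ρ+δ+γ)/((α*σ+δ+γ)*γ), σ*ω*ρ*(α*σ*ρ+δ+γ)/((α*σ+δ+γ)*γ),
           α*σ*β*(δ+2*γ)/(γ*(α*σ+δ+γ)*(β+δ+2*γ));
         σ*ω*(α*σ*ρ+δ+γ*ρ)/((α*σ+δ+γ)*γ), σ*ω*ρ*(α*σ*ρ+δ+γ*ρ)/((α*σ+δ+γ)*γ),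
           β*(δ+2*γ)*(α*σ+γ)/(γ*(α*σ+δ+γ)*(β+δ+2*γ));
         σ*ω*(α*σ*ρ+δ+γ*ρ)/((α*σ+δ+γ)*γ), σ*ω*ρ*(α*σ*ρ+δ+γ*ρ)/((α*σ+δ+γ)*γ),
           β*(α*σ*(δ+γ)+γ^2)/(γ*(α*σ+δ+γ)*(β+δ+2*γ))]
    (1 - P)⁻¹ * Φ = M ∧ (1 - PE)⁻¹ * ΦE = M := by
  intro P Φ PE ΦE M
  obtain ⟨hρ₀, hρ₁⟩ := hρ
  obtain ⟨hσ₀, hσ₁⟩ := hσ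
  have h_prob : 0 ≤ 1 - (1 - ρ) * (1 - σ) :=
    sub_nonneg.2 (mul_le_one₀ (by linarith) (by linarith) (by linarith))
  have hε₁ : 0 ≤ ω * (1 - (1 - ρ) * (1 - σ)) := mul_nonneg hω.le h_prob
  have hε₂ : 0 ≤ ρ * ω * (1 - (1 - ρ) * (1 - σ)) := mul_nonneg (mul_nonneg hρ₀ hω.le) h_prob
  exact ⟨SIS.inv_one_sub_P_mul_Φ ω ρ hα.le hσ₀.le hβ.le hδ.le hγ,
    SIS.inv_one_sub_PE_mul_ΦE ω ρ hα.le hσ₀.le hβ.le hδ.le hγ hε₁ hε₂⟩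
end

section
/- Let μG, pL > 0 with pL < 1, let R0 = (pL + μG + √((pL + μG)² + 4 pL μG))/2 and R* = μG(1 + pL)/(1 − pL). Then R0 > 1 ⟺ R* > 1, R0 = 1 ⟺ R* = 1, and R0 < 1 ⟺ R* < 1. -/
theorem stmt_15 (μG pL : ℝ) (hG : 0 < μG) (hL0 : 0 < pL) (hL1 : pL < 1) :
    let R0 : ℝ := (pL + μG + Real.sqrt ((pL + μG)^2 + 4*pL*μG)) / 2
    let Rs : ℝ := μG * (1 + pL) / (1 - pL)
    (R0 > 1 ↔ Rs > 1) ∧ (R0 = 1 ↔ Rs = 1) ∧ (R0 < 1 ↔ Rs < 1) := by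
  intro R0 Rs
  set N : ℝ := pL + μG + pL * μG - 1 with hN
  set s : ℝ := Real.sqrt ((pL + μG)^2 + 4*pL*μG) with hsdef
  have hD : (0:ℝ) ≤ (pL + μG)^2 + 4*pL*μG := by positivity
  have hs0 : 0 ≤ s := Real.sqrt_nonneg _
  have hs2 : s^2 = (pL + μG)^2 + 4*pL*μG := Real.sq_sqrt hD
  have h1p : (0:ℝ) < 1 - pL := by linarith
  have hR0 : R0 = (pL + μG + s) / 2 := rfl
  have hRs : Rs = μG * (1 + pL) / (1 - pL) := rfl
  -- sign facts
  have key1 : 0 < N → R0 > 1 ∧ Rs > 1 := by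
    intro h
    constructor
    · rw [hR0]
      have hsc : 2 - pL - μG < s := by nlinarith [sq_nonneg (s - (2 - pL - μG)), sq_nonneg s]
      linarith
    · rw [hRs, gt_iff_lt, lt_div_iff₀ h1p]; nlinarith
  have key2 : N = 0 → R0 = 1 ∧ Rs = 1 := by
    intro h
    have hc : (0:ℝ) ≤ 2 - pL - μG := by nlinarith
    have hDc : (pL + μG)^2 + 4*pL*μG = (2 - pL - μG)^2 := by nlinarith
    have hsc : s = 2 - pL - μG := by
      rw [hsdef, hDc, Real.sqrt_sq hc]
    constructor
    · rw [hR0, hsc]; ring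
    · rw [hRs, div_eq_one_iff_eq (by linarith)]; nlinarith
  have key3 : N < 0 → R0 < 1 ∧ Rs < 1 := by
    intro h
    constructor
    · rw [hR0]
      have hc : (0:ℝ) < 2 - pL - μG := by nlinarith
      have hsc : s < 2 - pL - μG := by nlinarith
      linarith
    · rw [hRs, div_lt_one h1p]; nlinarith
  rcases lt_trichotomy N 0 with h | h | h
  · obtain ⟨h1, h2⟩ := key3 h
    refine ⟨⟨fun hh => absurd hh (by linarith), fun hh => absurd hh (by linarith)⟩,
      ⟨fun hh => absurd hh (by linarith), fun hh => absurd hh (by linarith)⟩,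
      ⟨fun _ => h2, fun _ => h1⟩⟩
  · obtain ⟨h1, h2⟩ := key2 h
    refine ⟨⟨fun hh => absurd hh (by simp [h1]), fun hh => absurd hh (by simp [h2])⟩,
      ⟨fun _ => h2, fun _ => h1⟩,
      ⟨fun hh => absurd hh (by simp [h1]), fun hh => absurd hh (by simp [h2])⟩⟩
  · obtain ⟨h1, h2⟩ := key1 h
    refine ⟨⟨fun _ => h2, fun _ => h1⟩,
      ⟨fun hh => absurd hh (by linarith), fun hh => absurd hh (by linarith)⟩,
      ⟨fun hh => absurd hh (by linarith), fun hh => absurd hh (by linarith)⟩⟩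
end
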